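/- Let (λ, a', s) and (λ, b', t) be non-vertical Heisenberg translations (so a' ≠ 0 and b' ≠ 0). Then there exists R̂ ∈ Ĝ with R̂(e,0) ∈ ℂ·(e,0) such that R̂ ∘ (λ,a',s) ∘ R̂⁻¹ = (λ, b', t). In particular, all non-vertical Heisenberg translations with the same λ are conjugate in Ĝ. -/

import Mathlib

noncomputable section

variable {H : Type*} [NormedAddCommGroup H] [InnerProductSpace ℂ H] [CompleteSpace H]

/-- The Hermitian form `Â((x,z),(y,w)) = -z·conj⟨y,e⟩ - ⟨x,e⟩·conj w + ⟨x',y'⟩`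
(paper convention: linear in the first argument, with `⟨a,b⟩ = inner b a` in Mathlib,
and `x' = x - ⟨x,e⟩e`). -/
def hatA (e : H) (u v : H × ℂ) : ℂ :=
  - u.2 * (inner ℂ v.1 e : ℂ) - (inner ℂ e u.1 : ℂ) * (starRingEnd ℂ) v.2
    + (inner ℂ (v.1 - (inner ℂ e v.1 : ℂ) • e) (u.1 - (inner ℂ e u.1 : ℂ) • e) : ℂ)

/-- Membership in the group `Ĝ` of bounded bijective linear maps preserving `Â`. -/
def memGhat (e : H) (T : (H × ℂ) →L[ℂ] (H × ℂ)) : Prop :=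
  Function.Bijective T ∧ ∀ u v : H × ℂ, hatA e (T u) (T v) = hatA e u v

/-- `T` is the Heisenberg translation `(λ, a', s)`: an element of `Ĝ` sending
`(x,z)` to `λ·((⟨x,e⟩ + ⟨x',a'⟩ + s·z)·e + x' + z·a', z)`, where `|λ| = 1`,
`a' ⊥ e`, `s ≠ 0` and `Re s = ‖a'‖²/2`. -/
def IsHeisenberg (e : H) (T : (H × ℂ) →L[ℂ] (H × ℂ)) (lam : ℂ) (a' : H) (s : ℂ) :
    Prop :=
  ‖lam‖ = 1 ∧ a' ∈ (ℂ ∙ e)ᗮ ∧ s ≠ 0 ∧ s.re = (1 / 2) * ‖a'‖ ^ 2 ∧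
  memGhat e T ∧
  ∀ (x : H) (z : ℂ),
    T (x, z) = lam •
      (((((inner ℂ e x : ℂ) + (inner ℂ a' (x - (inner ℂ e x : ℂ) • e) : ℂ) + s * z) • e
          + (x - (inner ℂ e x : ℂ) • e) + z • a', z)) : H × ℂ)

/-- `K†`, the `Â`-orthogonal complement of a subspace `K` of `H ⊕ ℂ`. -/
def daggerHat (e : H) (K : Submodule ℂ (H × ℂ)) : Submodule ℂ (H × ℂ) where
  carrier := {v | ∀ m ∈ K, hatA e v m = 0}
  add_mem' := by
    intro a b ha hb m hm
    have h1 := ha m hm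
    have h2 := hb m hm
    simp only [hatA, Prod.fst_add, Prod.snd_add, inner_add_right, inner_sub_right,
      inner_smul_right, add_smul] at *
    ring_nf at *
    linear_combination h1 + h2
  zero_mem' := by
    intro m hm
    simp [hatA]
  smul_mem' := by
    intro c a ha m hm
    have h1 := ha m hm
    simp only [hatA, Prod.smul_fst, Prod.smul_snd, inner_smul_right, inner_sub_right,
      smul_eq_mul, smul_smul] at *
    ring_nf at *
    linear_combination c * h1

end

/-!
Conjugating `(λ, a, s)` by the dilation `D_c` gives `(λ, c a, |c|² s)`, by the lift of a unitary
`U` of `H` fixing `e` gives `(λ, U a, s)`, and by the Heisenberg translation `(1, v, r)` gives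
`(λ, a, s + ⟨a, v⟩ - ⟨v, a⟩)`; all three conjugators fix `(e, 0)` up to a scalar.
Choose `c` with `‖c a'‖ = ‖b'‖` and `⟨c a', b'⟩` real: then the Householder reflection in
`(c a' - b')ᗮ` is a unitary fixing `e` and sending `c a'` to `b'`. Finally
`Re t = ‖b'‖² / 2 = Re (|c|² s)`, so `t - |c|² s` is purely imaginary, and it is the commutator
term `⟨b', v⟩ - ⟨v, b'⟩` for a suitable `v ∈ ℂ b'`.
-/

open ComplexConjugate

section
variable {𝕜 E : Type*} [RCLike 𝕜] [NormedAddCommGroup E] [InnerProductSpace 𝕜 E]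

theorem Submodule.reflection_sub_of_inner_comm {p q : E} (hn : ‖p‖ = ‖q‖)
    (hpq : inner 𝕜 p q = inner 𝕜 q p) : reflection (𝕜 ∙ (p - q))ᗮ p = q := by
  set R : E ≃ₗᵢ[𝕜] E := reflection (𝕜 ∙ (p - q))ᗮ
  have h_sub : R (p - q) = -(p - q) := reflection_orthogonalComplement_singleton_eq_neg (p - q)
  have h_add : R (p + q) = p + q := by
    apply reflection_mem_subspace_eq_self
    rw [mem_orthogonal_singleton_iff_inner_right, inner_sub_left, inner_add_right,
      inner_add_right, hpq, inner_self_eq_norm_sq_to_K, inner_self_eq_norm_sq_to_K, hn]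
    ring
  have h : R p + R p = q + q := by
    have := congrArg₂ (· + ·) h_add h_sub
    simp only [map_add, map_sub] at this
    convert this using 1 <;> abel
  exact (smul_right_injective E (two_ne_zero : (2 : 𝕜) ≠ 0)) (by simpa [two_smul] using h)

namespace LinearIsometryEquiv

variable (U : E ≃ₗᵢ[𝕜] E) {e : E}

theorem inner_map_of_apply_eq_self (hU : U e = e) (y : E) :
    inner 𝕜 e (U y) = inner 𝕜 e y := by
  rw [← U.inner_map_map e y, hU]

theorem inner_map_left_of_apply_eq_self (hU : U e = e) (y : E) :
    inner 𝕜 (U y) e = inner 𝕜 y e := by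
  rw [← U.inner_map_map y e, hU]

end LinearIsometryEquiv

end

noncomputable section
variable {H : Type*} [NormedAddCommGroup H] [InnerProductSpace ℂ H]

local notation "⟪" x ", " y "⟫" => inner ℂ x y

theorem hatA_mk_of_inner_self_eq_one {e : H} (hee : ⟪e, e⟫ = 1) (x y : H) (z w : ℂ) :
    hatA e (x, z) (y, w) = ⟪y, x⟫ - ⟪y, e⟫ * ⟪e, x⟫ - z * ⟪y, e⟫ - ⟪e, x⟫ * conj w := by
  simp only [hatA, inner_sub_left, inner_sub_right, inner_smul_left, inner_smul_right,
    inner_conj_symm, hee]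
  ring

-- `P x` is the paper's `x'`.
def heisenbergTranslation (e : H) (lam : ℂ) (a : H) (s : ℂ) : (H × ℂ) →L[ℂ] (H × ℂ) :=
  let P : H →L[ℂ] H := .id ℂ H - (innerSL ℂ e).smulRight e
  let fst := ContinuousLinearMap.fst ℂ H ℂ
  let snd := ContinuousLinearMap.snd ℂ H ℂ
  lam • ((((innerSL ℂ e + (innerSL ℂ a).comp P).comp fst + s • snd).smulRight e
    + P.comp fst + snd.smulRight a).prod snd)

theorem heisenbergTranslation_apply (e : H) (lam : ℂ) (a : H) (s : ℂ) (x : H) (z : ℂ) :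
    heisenbergTranslation e lam a s (x, z) =
      lam • ((⟪e, x⟫ + ⟪a, x - ⟪e, x⟫ • e⟫ + s * z) • e + (x - ⟪e, x⟫ • e) + z • a, z) := by
  simp [heisenbergTranslation]

theorem IsHeisenberg.eq_heisenbergTranslation {e : H} {T : (H × ℂ) →L[ℂ] (H × ℂ)} {lam : ℂ}
    {a : H} {s : ℂ} (hT : IsHeisenberg e T lam a s) : T = heisenbergTranslation e lam a s := by
  obtain ⟨-, -, -, -, -, hT_apply⟩ := hT
  exact ContinuousLinearMap.ext fun ⟨x, z⟩ => by rw [hT_apply, heisenbergTranslation_apply]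

theorem heisenbergTranslation_smul (e : H) (lam : ℂ) (a : H) (s : ℂ) :
    heisenbergTranslation e lam a s = lam • heisenbergTranslation e 1 a s := by
  simp [heisenbergTranslation]

theorem heisenbergTranslation_one_zero_zero (e : H) (p : H × ℂ) :
    heisenbergTranslation e 1 0 0 p = p := by
  obtain ⟨x, z⟩ := p
  simp [heisenbergTranslation_apply]

theorem heisenbergTranslation_heisenbergTranslation {e : H} (hee : ⟪e, e⟫ = 1) {a : H}
    (hae : ⟪a, e⟫ = 0) (v : H) (r s : ℂ) (p : H × ℂ) :
    heisenbergTranslation e 1 v r (heisenbergTranslation e 1 a s p) =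
      heisenbergTranslation e 1 (a + v) (s + r + ⟪v, a⟫) p := by
  obtain ⟨x, z⟩ := p
  have hea : ⟪e, a⟫ = 0 := by rw [← inner_conj_symm, hae, map_zero]
  simp only [heisenbergTranslation_apply, one_smul, inner_add_left, inner_add_right,
    inner_sub_right, inner_smul_right, hee, hea]
  ext <;> simp only
  match_scalars <;> ring

theorem hatA_heisenbergTranslation {e : H} (hee : ⟪e, e⟫ = 1) {lam : ℂ} (hlam : ‖lam‖ = 1)
    {a : H} (hae : ⟪a, e⟫ = 0) {s : ℂ} (hs : s.re = 1 / 2 * ‖a‖ ^ 2) (u v : H × ℂ) :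
    hatA e (heisenbergTranslation e lam a s u) (heisenbergTranslation e lam a s v) =
      hatA e u v := by
  obtain ⟨x, z⟩ := u
  obtain ⟨y, w⟩ := v
  have hea : ⟪e, a⟫ = 0 := by rw [← inner_conj_symm, hae, map_zero]
  have hlam' : conj lam * lam = 1 := by
    rw [mul_comm, Complex.mul_conj', hlam]; norm_num
  have hss : s + conj s = ⟪a, a⟫ := by
    rw [Complex.add_conj, hs, inner_self_eq_norm_sq_to_K]; simp
  simp only [heisenbergTranslation_apply, Prod.smul_mk, smul_eq_mul,
    hatA_mk_of_inner_self_eq_one hee, inner_add_left, inner_add_right, inner_sub_left,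
    inner_sub_right, inner_smul_left, inner_smul_right, inner_conj_symm, hee, hea, hae, map_add,
    map_mul, mul_zero, sub_zero]
  linear_combination (⟪y, x⟫ - ⟪y, e⟫ * ⟪e, x⟫ - z * ⟪y, e⟫ - ⟪e, x⟫ * conj w
      + z * conj w * (⟪a, a⟫ - s - conj s)) * hlam' - z * conj w * hss

def heisenbergDilation (e : H) (c : ℂ) : (H × ℂ) →L[ℂ] (H × ℂ) :=
  (ContinuousLinearMap.id ℂ H + ((conj c - 1) • innerSL ℂ e).smulRight e).prodMap
    (c⁻¹ • ContinuousLinearMap.id ℂ ℂ)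

theorem heisenbergDilation_apply (e : H) (c : ℂ) (x : H) (z : ℂ) :
    heisenbergDilation e c (x, z) = (x + ((conj c - 1) * ⟪e, x⟫) • e, c⁻¹ * z) := by
  simp [heisenbergDilation, mul_smul]

theorem heisenbergDilation_heisenbergDilation_inv {e : H} (hee : ⟪e, e⟫ = 1) {c : ℂ} (hc : c ≠ 0)
    (p : H × ℂ) :
    heisenbergDilation e c (heisenbergDilation e c⁻¹ p) = p := by
  obtain ⟨x, z⟩ := p
  have hc' : conj c ≠ 0 := (map_ne_zero _).mpr hc
  simp only [heisenbergDilation_apply, inner_add_right, inner_smul_right, hee, map_inv₀]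
  ext
  · match_scalars <;> field_simp
    ring
  · field_simp

theorem hatA_heisenbergDilation {e : H} (hee : ⟪e, e⟫ = 1) {c : ℂ} (hc : c ≠ 0) (u v : H × ℂ) :
    hatA e (heisenbergDilation e c u) (heisenbergDilation e c v) = hatA e u v := by
  obtain ⟨x, z⟩ := u
  obtain ⟨y, w⟩ := v
  have hc' : conj c ≠ 0 := (map_ne_zero _).mpr hc
  simp only [heisenbergDilation_apply, hatA_mk_of_inner_self_eq_one hee, inner_add_left,
    inner_add_right, inner_smul_left, inner_smul_right, inner_conj_symm, hee, map_mul, map_sub,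
    map_one, map_inv₀, Complex.conj_conj]
  field_simp
  ring

theorem heisenbergDilation_heisenbergTranslation {e : H} (hee : ⟪e, e⟫ = 1) {c : ℂ} (hc : c ≠ 0)
    (lam : ℂ) {a : H} (hae : ⟪a, e⟫ = 0) (s : ℂ) (p : H × ℂ) :
    heisenbergDilation e c (heisenbergTranslation e lam a s p) =
      heisenbergTranslation e lam (c • a) (‖c‖ ^ 2 * s) (heisenbergDilation e c p) := by
  obtain ⟨x, z⟩ := p
  have hea : ⟪e, a⟫ = 0 := by rw [← inner_conj_symm, hae, map_zero]
  rw [← Complex.mul_conj']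
  simp only [heisenbergTranslation_apply, heisenbergDilation_apply, Prod.smul_mk, smul_eq_mul,
    inner_add_right, inner_sub_right, inner_smul_left, inner_smul_right, hee, hea, hae]
  ext
  · match_scalars <;> field_simp
    ring
  · ring

theorem hatA_mk_map_of_apply_eq_self {e : H} (U : H ≃ₗᵢ[ℂ] H) (hU : U e = e) (x y : H)
    (z w : ℂ) :
    hatA e (U x, z) (U y, w) = hatA e (x, z) (y, w) := by
  have h_perp (y : H) : U y - ⟪e, y⟫ • e = U (y - ⟪e, y⟫ • e) := by rw [map_sub, map_smul, hU]
  simp only [hatA, U.inner_map_of_apply_eq_self hU, U.inner_map_left_of_apply_eq_self hU, h_perp,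
    U.inner_map_map]

def StabConjugate (e : H) (T S : (H × ℂ) →L[ℂ] (H × ℂ)) : Prop :=
  ∃ R : (H × ℂ) ≃L[ℂ] (H × ℂ), memGhat e (R : (H × ℂ) →L[ℂ] (H × ℂ)) ∧
    (∃ c : ℂ, R ((e, 0) : H × ℂ) = c • ((e, 0) : H × ℂ)) ∧
    ∀ v : H × ℂ, R (T (R.symm v)) = S v

namespace StabConjugate

variable {e : H} {T S T' : (H × ℂ) →L[ℂ] (H × ℂ)}

theorem of_intertwine (R : (H × ℂ) ≃L[ℂ] (H × ℂ))
    (hR : ∀ u v : H × ℂ, hatA e (R u) (R v) = hatA e u v) (c : ℂ)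
    (hc : R ((e, 0) : H × ℂ) = c • ((e, 0) : H × ℂ)) (h : ∀ p, R (T p) = S (R p)) :
    StabConjugate e T S :=
  ⟨R, ⟨R.bijective, hR⟩, ⟨c, hc⟩, fun v => by rw [h, R.apply_symm_apply]⟩

theorem trans (h₁ : StabConjugate e T T') (h₂ : StabConjugate e T' S) :
    StabConjugate e T S := by
  obtain ⟨R₁, ⟨-, hR₁⟩, ⟨c₁, hc₁⟩, h₁⟩ := h₁
  obtain ⟨R₂, ⟨-, hR₂⟩, ⟨c₂, hc₂⟩, h₂⟩ := h₂
  refine of_intertwine (R₁.trans R₂) (fun u v => (hR₂ _ _).trans (hR₁ u v)) (c₁ * c₂) ?_ fun p => ?_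
  · rw [ContinuousLinearEquiv.trans_apply, hc₁, map_smul, hc₂, smul_smul]
  · rw [ContinuousLinearEquiv.trans_apply, ContinuousLinearEquiv.trans_apply, ← h₂,
      R₂.symm_apply_apply, ← h₁, R₁.symm_apply_apply]

end StabConjugate

theorem stabConjugate_dilation {e : H} (hee : ⟪e, e⟫ = 1) {c : ℂ} (hc : c ≠ 0) (lam : ℂ) {a : H}
    (hae : ⟪a, e⟫ = 0) (s : ℂ) :
    StabConjugate e (heisenbergTranslation e lam a s)
      (heisenbergTranslation e lam (c • a) (‖c‖ ^ 2 * s)) := by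
  have h_left : Function.LeftInverse (heisenbergDilation e c⁻¹) (heisenbergDilation e c) :=
    fun p => by simpa using heisenbergDilation_heisenbergDilation_inv hee (inv_ne_zero hc) p
  let D := ContinuousLinearEquiv.equivOfInverse (heisenbergDilation e c)
    (heisenbergDilation e c⁻¹) h_left (heisenbergDilation_heisenbergDilation_inv hee hc)
  refine .of_intertwine D (hatA_heisenbergDilation hee hc) (conj c) ?_
    (heisenbergDilation_heisenbergTranslation hee hc lam hae s)
  show heisenbergDilation e c (e, 0) = conj c • (e, 0)
  rw [heisenbergDilation_apply, hee, mul_zero, Prod.smul_mk, smul_zero]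
  congr 1
  module

theorem stabConjugate_unitary {e : H} (U : H ≃ₗᵢ[ℂ] H) (hU : U e = e) (lam : ℂ) (a : H)
    (s : ℂ) :
    StabConjugate e (heisenbergTranslation e lam a s) (heisenbergTranslation e lam (U a) s) := by
  refine .of_intertwine (U.toContinuousLinearEquiv.prodCongr (.refl ℂ ℂ))
    (fun u v => hatA_mk_map_of_apply_eq_self U hU u.1 v.1 u.2 v.2) 1 (by simp [hU]) ?_
  rintro ⟨x, z⟩
  simp [heisenbergTranslation_apply, hU, U.inner_map_map, U.inner_map_of_apply_eq_self hU,
    U.inner_map_left_of_apply_eq_self hU]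

theorem stabConjugate_translation {e : H} (hee : ⟪e, e⟫ = 1) {v : H} (hve : ⟪v, e⟫ = 0)
    (lam : ℂ) {a : H} (hae : ⟪a, e⟫ = 0) (s : ℂ) :
    StabConjugate e (heisenbergTranslation e lam a s)
      (heisenbergTranslation e lam a (s + ⟪v, a⟫ - ⟪a, v⟫)) := by
  set r : ℂ := ((1 / 2 * ‖v‖ ^ 2 : ℝ) : ℂ)
  have hvv : r + r - ⟪v, v⟫ = 0 := by
    rw [inner_self_eq_norm_sq_to_K]; simp [r]; ring
  have hnve : ⟪-v, e⟫ = 0 := by rw [inner_neg_left, hve, neg_zero]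
  let Q := ContinuousLinearEquiv.equivOfInverse (heisenbergTranslation e 1 v r)
    (heisenbergTranslation e 1 (-v) r)
    (fun p => by
      rw [heisenbergTranslation_heisenbergTranslation hee hve, add_neg_cancel, inner_neg_left,
        ← sub_eq_add_neg, hvv, heisenbergTranslation_one_zero_zero])
    (fun p => by
      rw [heisenbergTranslation_heisenbergTranslation hee hnve, neg_add_cancel, inner_neg_right,
        ← sub_eq_add_neg, hvv, heisenbergTranslation_one_zero_zero])
  refine .of_intertwine Q (hatA_heisenbergTranslation hee (by simp) hve (Complex.ofReal_re _)) 1 ?_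
    fun p => ?_
  · show heisenbergTranslation e 1 v r (e, 0) = 1 • (e, 0)
    rw [heisenbergTranslation_apply, hee]
    simp
  · show heisenbergTranslation e 1 v r _ =
      heisenbergTranslation e lam a _ (heisenbergTranslation e 1 v r p)
    rw [heisenbergTranslation_smul e lam, heisenbergTranslation_smul e lam, smul_apply,
      smul_apply, map_smul, heisenbergTranslation_heisenbergTranslation hee hae,
      heisenbergTranslation_heisenbergTranslation hee hve, add_comm a v]
    congr 3
    ring

theorem exists_norm_smul_eq_and_inner_comm {a : H} (ha : a ≠ 0) (b : H) :
    ∃ c : ℂ, ‖c • a‖ = ‖b‖ ∧ ⟪c • a, b⟫ = ⟪b, c • a⟫ := by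
  refine ⟨(‖b‖ / ‖a‖ : ℝ) * Complex.exp (⟪a, b⟫.arg * Complex.I), ?_, ?_⟩
  · rw [norm_smul, norm_mul, Complex.norm_exp_ofReal_mul_I, Complex.norm_real, Real.norm_eq_abs,
      abs_of_nonneg (by positivity), mul_one, div_mul_cancel₀ _ (norm_ne_zero_iff.mpr ha)]
  · rw [← inner_conj_symm b, eq_comm, Complex.conj_eq_iff_real, inner_smul_left]
    refine ⟨‖b‖ / ‖a‖ * ‖⟪a, b⟫‖, ?_⟩
    rw [map_mul, Complex.conj_ofReal, ← Complex.exp_conj, map_mul, Complex.conj_ofReal,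
      Complex.conj_I]
    conv_lhs => arg 2; rw [← Complex.norm_mul_exp_arg_mul_I ⟪a, b⟫]
    rw [mul_mul_mul_comm, ← Complex.exp_add]
    simp

theorem exists_inner_smul_sub_inner_smul_eq {b : H} (hb : b ≠ 0) {δ : ℂ} (hδ : δ.re = 0) :
    ∃ k : ℂ, ⟪k • b, b⟫ - ⟪b, k • b⟫ = δ := by
  have hδ' : conj δ = -δ := Complex.ext (by simp [hδ]) (by simp)
  have hb0 : ⟪b, b⟫ ≠ 0 := inner_self_ne_zero.mpr hb
  refine ⟨-δ / (2 * ⟪b, b⟫), ?_⟩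
  rw [inner_smul_left, inner_smul_right]
  simp only [map_div₀, map_neg, map_mul, hδ', inner_conj_symm, map_ofNat]
  field_simp
  ring

end

section
variable {H : Type*} [NormedAddCommGroup H] [InnerProductSpace ℂ H] [CompleteSpace H]

/-- any two non-vertical Heisenberg translations `(λ, a', s)` and
`(λ, b', t)` are conjugate in `Ĝ` by an element fixing the line `ℂ·(e,0)`. -/
theorem nonvertical_heisenberg_conjugate
    (e : H) (he : ‖e‖ = 1) (lam : ℂ) (a' b' : H) (s t : ℂ)
    (ha' : a' ≠ 0) (hb' : b' ≠ 0)
    (T S : (H × ℂ) →L[ℂ] (H × ℂ))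
    (hT : IsHeisenberg e T lam a' s) (hS : IsHeisenberg e S lam b' t) :
    ∃ R : (H × ℂ) ≃L[ℂ] (H × ℂ), memGhat e (R : (H × ℂ) →L[ℂ] (H × ℂ)) ∧
      (∃ c : ℂ, R ((e, 0) : H × ℂ) = c • ((e, 0) : H × ℂ)) ∧
      ∀ v : H × ℂ, R (T (R.symm v)) = S v := by
  rw [hT.eq_heisenbergTranslation, hS.eq_heisenbergTranslation]
  obtain ⟨-, ha_perp, -, hs_re, -⟩ := hT
  obtain ⟨-, hb_perp, -, ht_re, -⟩ := hS
  have hee : inner ℂ e e = 1 := inner_self_eq_one_of_norm_eq_one he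
  have hae := Submodule.mem_orthogonal_singleton_iff_inner_left.mp ha_perp
  have hbe := Submodule.mem_orthogonal_singleton_iff_inner_left.mp hb_perp
  obtain ⟨c, hc_norm, hc_inner⟩ := exists_norm_smul_eq_and_inner_comm ha' b'
  have hc : c ≠ 0 := by
    rintro rfl
    exact hb' (norm_eq_zero.mp (by simpa using hc_norm.symm))
  set U := Submodule.reflection (ℂ ∙ (c • a' - b'))ᗮ
  have hU : U e = e := Submodule.reflection_mem_subspace_eq_self <|
    Submodule.mem_orthogonal_singleton_iff_inner_right.mpr <| by
      rw [inner_sub_left, inner_smul_left, hae, hbe, mul_zero, sub_zero]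
  have h_unitary := stabConjugate_unitary U hU lam (c • a') (‖c‖ ^ 2 * s)
  rw [Submodule.reflection_sub_of_inner_comm hc_norm hc_inner] at h_unitary
  have hδ : (t - ‖c‖ ^ 2 * s).re = 0 := by
    rw [norm_smul] at hc_norm
    rw [Complex.sub_re, ht_re, ← Complex.ofReal_pow, Complex.re_ofReal_mul, hs_re,
      ← hc_norm]
    ring
  obtain ⟨k, hk⟩ := exists_inner_smul_sub_inner_smul_eq hb' hδ
  have h_translation := stabConjugate_translation hee
    (by rw [inner_smul_left, hbe, mul_zero] : inner ℂ (k • b') e = 0) lam hbe (‖c‖ ^ 2 * s)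
  rw [add_sub_assoc, hk, add_sub_cancel] at h_translation
  exact ((stabConjugate_dilation hee hc lam hae s).trans h_unitary).trans h_translation

end
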